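/- arXiv:1212.5333 — 7 statements merged into one kernel-verified Lean document; each statement's English description precedes it below -/
import Mathlib

section
/- The function F(t,x) = exp(-(x+κ)/(κ t x)) satisfies the PDE κ t ∂_t F + x² ∂_{xx} F + (a x - x² - 1/t) ∂_x F = 0 for all t > 0 and x > 0, provided a = 2 - κ. -/
/-- The hard-edge Fokker-Planck equation is satisfied by the explicit
distribution `F(t,x) = exp(-(x+κ)/(κ t x))` when `a = 2 - κ`. -/
theorem stmt_0 (κ a : ℝ) (hκ : 0 < κ) (ha : a = 2 - κ)
    (F : ℝ → ℝ → ℝ)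
    (hF : ∀ t x : ℝ, F t x = Real.exp (-((x + κ) / (κ * t * x)))) :
    ∀ t : ℝ, 0 < t → ∀ x : ℝ, 0 < x →
      κ * t * deriv (fun s => F s x) t
        + x ^ 2 * deriv (deriv (fun u => F t u)) x
        + (a * x - x ^ 2 - 1 / t) * deriv (fun u => F t u) x = 0 := by
  intro t ht x hx
  have hκ0 : κ ≠ 0 := hκ.ne'
  have ht0 : t ≠ 0 := ht.ne'
  have hx0 : x ≠ 0 := hx.ne'
  -- time derivative
  have hdt : HasDerivAt (fun s => F s x)
      (Real.exp (-((x + κ) / (κ * t * x))) * ((x + κ) / (κ * t ^ 2 * x))) t := by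
    have hden : HasDerivAt (fun s : ℝ => κ * s * x) (κ * x) t := by
      simpa [mul_comm, mul_assoc, mul_left_comm] using
        ((hasDerivAt_id t).const_mul (κ * x))
    have hq := (hasDerivAt_const t (x + κ)).div hden
      (by simp [hκ0, ht0, hx0])
    have hg := hq.neg
    have := hg.exp
    have heq : (fun s => F s x) = fun s => Real.exp (-((x + κ) / (κ * s * x))) := by
      funext s; exact hF s x
    rw [heq]
    simp only [Pi.neg_apply, Pi.div_apply] at this
    convert this using 1
    field_simp
    ring
  -- first x-derivative at any u ≠ 0
  have hd1 : ∀ u : ℝ, u ≠ 0 → HasDerivAt (fun u => F t u)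
      (Real.exp (-((u + κ) / (κ * t * u))) * (1 / (t * u ^ 2))) u := by
    intro u hu
    have hden : HasDerivAt (fun u : ℝ => κ * t * u) (κ * t) u := by
      simpa using ((hasDerivAt_id u).const_mul (κ * t))
    have hnum : HasDerivAt (fun u : ℝ => u + κ) 1 u := (hasDerivAt_id u).add_const κ
    have hq := hnum.div hden (by simp [hκ0, ht0, hu])
    have := hq.neg.exp
    have heq : (fun u => F t u) = fun u => Real.exp (-((u + κ) / (κ * t * u))) := by
      funext u; exact hF t u
    rw [heq]
    simp only [Pi.neg_apply, Pi.div_apply] at this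
    convert this using 1
    field_simp
    ring
  -- second x-derivative
  have hev : deriv (fun u => F t u) =ᶠ[nhds x]
      (fun u => Real.exp (-((u + κ) / (κ * t * u))) * (1 / (t * u ^ 2))) := by
    filter_upwards [eventually_ne_nhds hx0] with u hu
    exact (hd1 u hu).deriv
  have hd2 : HasDerivAt (fun u => Real.exp (-((u + κ) / (κ * t * u))) * (1 / (t * u ^ 2)))
      (Real.exp (-((x + κ) / (κ * t * x))) * (1 / (t * x ^ 2)) * (1 / (t * x ^ 2))
        + Real.exp (-((x + κ) / (κ * t * x))) * (-(t * (2 * x)) / (t * x ^ 2) ^ 2)) x := by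
    have hden : HasDerivAt (fun u : ℝ => κ * t * u) (κ * t) x := by
      simpa using ((hasDerivAt_id x).const_mul (κ * t))
    have hnum : HasDerivAt (fun u : ℝ => u + κ) 1 x := (hasDerivAt_id x).add_const κ
    have hq := hnum.div hden (by simp [hκ0, ht0, hx0])
    have he : HasDerivAt (fun u : ℝ => Real.exp (-((u + κ) / (κ * t * u))))
        (Real.exp (-((x + κ) / (κ * t * x))) * (1 / (t * x ^ 2))) x := by
      have := hq.neg.exp
      simp only [Pi.neg_apply, Pi.div_apply] at this
      convert this using 1
      field_simp
      ring
    have hp : HasDerivAt (fun u : ℝ => t * u ^ 2) (t * (2 * x)) x := by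
      simpa [mul_assoc] using ((hasDerivAt_pow 2 x).const_mul t)
    have hr : HasDerivAt (fun u : ℝ => 1 / (t * u ^ 2))
        (-(t * (2 * x)) / (t * x ^ 2) ^ 2) x := by
      have := (hasDerivAt_const x (1 : ℝ)).div hp (by simp [ht0, hx0])
      simp only [Pi.div_def] at this
      exact this.congr_deriv (by ring)
    exact he.mul hr
  have key2 : deriv (deriv (fun u => F t u)) x
      = Real.exp (-((x + κ) / (κ * t * x))) * (1 / (t * x ^ 2)) * (1 / (t * x ^ 2))
        + Real.exp (-((x + κ) / (κ * t * x))) * (-(t * (2 * x)) / (t * x ^ 2) ^ 2) := by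
    rw [hev.deriv_eq]
    exact hd2.deriv
  rw [hdt.deriv, key2, (hd1 x hx0).deriv, ha]
  have hE := Real.exp_pos (-((x + κ) / (κ * t * x)))
  field_simp
  ring
end

section
/- Suppose functions y, q, r of t>0 satisfy r = -1 + 2q², t³ y' = r - t³y² - (a+1)t²y, and t³ y r' = (r+1)(r - 1 - (a-1)t²y) on an interval where y ≠ 0. Then y satisfies the Painlevé III equation y'' = (y')²/y - y'/t + y³ + (a/t) y² - (a-1)/t⁴ - 1/(t⁶ y). -/
/-- If `r = -1 + 2q²`, `t³y' = r - t³y² - (a+1)t²y` and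
`t³ y r' = (r+1)(r - 1 - (a-1)t²y)` on an interval of positive reals with
`y ≠ 0`, then `y` satisfies the Painlevé III equation
`y'' = (y')²/y - y'/t + y³ + (a/t)y² - (a-1)/t⁴ - 1/(t⁶y)`. -/
theorem stmt_7 (a : ℝ) (I : Set ℝ) (hI : IsOpen I) (hIpos : I ⊆ Set.Ioi 0)
    (y q r : ℝ → ℝ)
    (hy : ContDiffOn ℝ (⊤ : ℕ∞) y I) (hq : ContDiffOn ℝ (⊤ : ℕ∞) q I)
    (hr : ContDiffOn ℝ (⊤ : ℕ∞) r I)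
    (hy0 : ∀ t ∈ I, y t ≠ 0)
    (hrq : ∀ t ∈ I, r t = -1 + 2 * (q t) ^ 2)
    (ode1 : ∀ t ∈ I, t ^ 3 * deriv y t = r t - t ^ 3 * (y t) ^ 2 - (a + 1) * t ^ 2 * y t)
    (ode2 : ∀ t ∈ I, t ^ 3 * y t * deriv r t = (r t + 1) * (r t - 1 - (a - 1) * t ^ 2 * y t)) :
    ∀ t ∈ I,
      deriv (deriv y) t
        = (deriv y t) ^ 2 / y t - deriv y t / t + (y t) ^ 3
            + (a / t) * (y t) ^ 2 - (a - 1) / t ^ 4 - 1 / (t ^ 6 * y t) := by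
  intro t ht
  have htpos : (0:ℝ) < t := hIpos ht
  have ht0 : t ≠ 0 := ne_of_gt htpos
  have hyt : y t ≠ 0 := hy0 t ht
  -- differentiability facts at t
  have hyd : DifferentiableOn ℝ y I := hy.differentiableOn (by simp)
  have hydd : DifferentiableOn ℝ (deriv y) I := by
    have := hy.deriv_of_isOpen (m := (⊤ : ℕ∞)) hI (by simp)
    exact this.differentiableOn (by simp)
  have hrd : DifferentiableOn ℝ r I := hr.differentiableOn (by simp)
  have hY : HasDerivAt y (deriv y t) t :=
    ((hyd t ht).differentiableAt (hI.mem_nhds ht)).hasDerivAt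
  have hY' : HasDerivAt (deriv y) (deriv (deriv y) t) t :=
    ((hydd t ht).differentiableAt (hI.mem_nhds ht)).hasDerivAt
  have hR : HasDerivAt r (deriv r t) t :=
    ((hrd t ht).differentiableAt (hI.mem_nhds ht)).hasDerivAt
  -- differentiate ode1
  have hF : HasDerivAt (fun s => s ^ 3 * deriv y s)
      (3 * t ^ 2 * deriv y t + t ^ 3 * deriv (deriv y) t) t := by
    have h1 : HasDerivAt (fun s : ℝ => s ^ 3) (3 * t ^ 2) t := by
      simpa using (hasDerivAt_pow 3 t)
    exact (h1.mul hY').congr_deriv (by ring)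
  have hG : HasDerivAt (fun s => r s - s ^ 3 * (y s) ^ 2 - (a + 1) * s ^ 2 * y s)
      (deriv r t - (3 * t ^ 2 * (y t) ^ 2 + t ^ 3 * (2 * y t * deriv y t))
        - ((a + 1) * (2 * t) * y t + (a + 1) * t ^ 2 * deriv y t)) t := by
    have h1 : HasDerivAt (fun s : ℝ => s ^ 3) (3 * t ^ 2) t := by
      simpa using (hasDerivAt_pow 3 t)
    have h2 : HasDerivAt (fun s : ℝ => (y s) ^ 2) (2 * y t * deriv y t) t := by
      exact (hY.pow 2).congr_deriv (by simp)
    have h3 : HasDerivAt (fun s : ℝ => s ^ 3 * (y s) ^ 2)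
        (3 * t ^ 2 * (y t) ^ 2 + t ^ 3 * (2 * y t * deriv y t)) t := h1.mul h2
    have h4 : HasDerivAt (fun s : ℝ => (a + 1) * s ^ 2) ((a + 1) * (2 * t)) t := by
      have := (hasDerivAt_pow 2 t).const_mul (a + 1)
      simpa using this
    have h5 : HasDerivAt (fun s : ℝ => (a + 1) * s ^ 2 * y s)
        ((a + 1) * (2 * t) * y t + (a + 1) * t ^ 2 * deriv y t) t := h4.mul hY
    exact (hR.sub h3).sub h5
  have heq : (fun s => s ^ 3 * deriv y s)
      =ᶠ[nhds t] (fun s => r s - s ^ 3 * (y s) ^ 2 - (a + 1) * s ^ 2 * y s) := by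
    filter_upwards [hI.mem_nhds ht] with s hs using ode1 s hs
  have hderiv : 3 * t ^ 2 * deriv y t + t ^ 3 * deriv (deriv y) t
      = deriv r t - (3 * t ^ 2 * (y t) ^ 2 + t ^ 3 * (2 * y t * deriv y t))
        - ((a + 1) * (2 * t) * y t + (a + 1) * t ^ 2 * deriv y t) := by
    have := (hF.congr_of_eventuallyEq heq.symm).unique hG
    linarith [this]
  have h1 := ode1 t ht
  have h2 := ode2 t ht
  set Y := y t
  set Y' := deriv y t
  set Y'' := deriv (deriv y) t
  set R := r t
  set R' := deriv r t
  have hRval : R = t ^ 3 * Y' + t ^ 3 * Y ^ 2 + (a + 1) * t ^ 2 * Y := by linarith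
  have key : t ^ 6 * Y * Y''
      = (R + 1) * (R - 1 - (a - 1) * t ^ 2 * Y)
        - t ^ 3 * Y * (3 * t ^ 2 * Y' + 3 * t ^ 2 * Y ^ 2 + 2 * t ^ 3 * Y * Y'
          + 2 * (a + 1) * t * Y + (a + 1) * t ^ 2 * Y') := by
    linear_combination (t ^ 3 * Y) * hderiv + h2
  rw [hRval] at key
  field_simp
  linear_combination key
end

section
/- Suppose y and r are smooth functions on an interval of positive reals with y, t²y + something nonvanishing as needed, satisfying t(t²y)' = r - t³y² + a t²y and t r' = (r²-1)/(t²y) + a(r+1). Then r satisfies the second-order ODE t(r²-1)(t r')' = r(t r')² + (r²-1)²/t - a²(r+1)². -/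
/-- If `t(t²y)' = r - t³y² + a t²y` and `t r' = (r²-1)/(t²y) + a(r+1)` on an
interval of positive reals with `y ≠ 0`, then `r` satisfies
`t(r²-1)(t r')' = r(t r')² + (r²-1)²/t - a²(r+1)²`. -/
theorem stmt_8 (a : ℝ) (I : Set ℝ) (hI : IsOpen I) (hIpos : I ⊆ Set.Ioi 0)
    (y r : ℝ → ℝ)
    (hy : ContDiffOn ℝ (⊤ : ℕ∞) y I) (hr : ContDiffOn ℝ (⊤ : ℕ∞) r I)
    (hy0 : ∀ t ∈ I, y t ≠ 0)
    (ode1 : ∀ t ∈ I, t * deriv (fun s => s ^ 2 * y s) t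
        = r t - t ^ 3 * (y t) ^ 2 + a * t ^ 2 * y t)
    (ode2 : ∀ t ∈ I, t * deriv r t = ((r t) ^ 2 - 1) / (t ^ 2 * y t) + a * (r t + 1)) :
    ∀ t ∈ I,
      t * ((r t) ^ 2 - 1) * deriv (fun s => s * deriv r s) t
        = r t * (t * deriv r t) ^ 2 + ((r t) ^ 2 - 1) ^ 2 / t
            - a ^ 2 * (r t + 1) ^ 2 := by
  intro t ht
  have htpos : (0:ℝ) < t := hIpos ht
  have ht0 : t ≠ 0 := ne_of_gt htpos
  have hyt : y t ≠ 0 := hy0 t ht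
  have hmem : I ∈ nhds t := hI.mem_nhds ht
  have hydiff : DifferentiableAt ℝ y t :=
    ((hy.differentiableOn (by simp)).differentiableAt hmem)
  have hrdiff : DifferentiableAt ℝ r t :=
    ((hr.differentiableOn (by simp)).differentiableAt hmem)
  have hyd : HasDerivAt y (deriv y t) t := hydiff.hasDerivAt
  have hrd : HasDerivAt r (deriv r t) t := hrdiff.hasDerivAt
  -- u = t^2 * y
  have hu : HasDerivAt (fun s => s ^ 2 * y s)
      ((2 * t ^ 1) * y t + t ^ 2 * deriv y t) t :=
    ((hasDerivAt_pow 2 t).mul hyd).congr_deriv (by push_cast; ring)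
  have hu0 : t ^ 2 * y t ≠ 0 := by positivity
  -- numerator r^2 - 1
  have hnum : HasDerivAt (fun s => r s ^ 2 - 1) ((2 * r t ^ 1) * deriv r t) t :=
    ((hrd.pow 2).sub_const 1).congr_deriv (by push_cast; ring)
  have hG : HasDerivAt (fun s => (r s ^ 2 - 1) / (s ^ 2 * y s) + a * (r s + 1))
      (((2 * r t ^ 1) * deriv r t * (t ^ 2 * y t)
          - (r t ^ 2 - 1) * ((2 * t ^ 1) * y t + t ^ 2 * deriv y t)) / (t ^ 2 * y t) ^ 2
        + a * deriv r t) t :=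
    (hnum.div hu hu0).add ((hrd.add_const 1).const_mul a)
  have heq : (fun s => s * deriv r s)
      =ᶠ[nhds t] (fun s => (r s ^ 2 - 1) / (s ^ 2 * y s) + a * (r s + 1)) := by
    filter_upwards [hmem] with s hs
    exact ode2 s hs
  have hDeq := heq.deriv_eq
  rw [hDeq, hG.deriv]
  -- known values
  have h1 := ode1 t ht
  have h2 := ode2 t ht
  have hy' : deriv y t = (r t - t ^ 3 * (y t) ^ 2 + a * t ^ 2 * y t
      - t * (2 * t * y t)) / (t ^ 3) := by
    rw [hu.deriv] at h1
    field_simp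
    nlinarith [h1]
  have hr' : deriv r t = ((r t ^ 2 - 1) + a * (r t + 1) * (t ^ 2 * y t))
      / (t * (t ^ 2 * y t)) := by
    field_simp at h2 ⊢
    linarith [h2]
  rw [hr', hy']
  field_simp
  ring
end

section
/- If r is a smooth function satisfying t(r²-1)(t r')' = r(t r')² + (r²-1)²/t - a²(r+1)², and q is defined by r = -1 + 2q² with q smooth, then q satisfies t(q²-1)(t q')' = q(t q')² + (q/t)·q²(q²-2) + (1/t - a²/4)q, equivalently t(q²-1)(t q')' = q(t q')² + (1/t)q³(q²-2) + (1/t - a²/4)q. -/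
open Filter Topology

private lemma key (a t Q Q' Q'' : ℝ) (ht : t ≠ 0) (hQ : Q ≠ 0)
    (h : t * ((-1 + 2*Q^2)^2 - 1) * (4*Q*Q' + 4*t*Q'^2 + 4*t*Q*Q'')
      = (-1 + 2*Q^2) * (t * (4*Q*Q'))^2 + ((-1 + 2*Q^2)^2 - 1)^2 / t
        - a^2 * ((-1 + 2*Q^2) + 1)^2) :
    t * (Q^2 - 1) * (Q' + t*Q'')
      = Q * (t*Q')^2 + (1/t) * Q^3 * (Q^2-2) + (1/t - a^2/4) * Q := by
  field_simp at h ⊢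
  have h2 : Q^3 * (t ^ 2 * 4 * (Q ^ 2 - 1) * (Q' + t * Q''))
      = Q^3 * (Q * (4 * (t ^ 3 * Q' ^ 2 + Q ^ 2 * (Q ^ 2 - 2)) + (4 - t * a ^ 2))) := by
    linear_combination (1/4) * h
  exact mul_left_cancel₀ (pow_ne_zero 3 hQ) h2

/-- If `r = 2q² - 1` satisfies `t(r²-1)(t r')' = r(t r')² + (r²-1)²/t - a²(r+1)²`,
then `q` satisfies the hard-edge Tracy-Widom equation
`t(q²-1)(t q')' = q(t q')² + (1/t)q³(q²-2) + (1/t - a²/4)q`. -/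
theorem stmt_9 (a : ℝ) (I : Set ℝ) (hI : IsOpen I) (hIpos : I ⊆ Set.Ioi 0)
    (r q : ℝ → ℝ)
    (hr : ContDiffOn ℝ (⊤ : ℕ∞) r I) (hq : ContDiffOn ℝ (⊤ : ℕ∞) q I)
    (hrq : ∀ t ∈ I, r t = -1 + 2 * (q t) ^ 2)
    (ode : ∀ t ∈ I,
        t * ((r t) ^ 2 - 1) * deriv (fun s => s * deriv r s) t
          = r t * (t * deriv r t) ^ 2 + ((r t) ^ 2 - 1) ^ 2 / t
              - a ^ 2 * (r t + 1) ^ 2) :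
    ∀ t ∈ I,
      t * ((q t) ^ 2 - 1) * deriv (fun s => s * deriv q s) t
        = q t * (t * deriv q t) ^ 2 + (1 / t) * (q t) ^ 3 * ((q t) ^ 2 - 2)
            + (1 / t - a ^ 2 / 4) * q t := by
  have hdq : ContDiffOn ℝ (⊤ : ℕ∞) (deriv q) I := hq.deriv_of_isOpen hI (by simp)
  have hqd : ∀ s ∈ I, HasDerivAt q (deriv q s) s := fun s hs =>
    ((hq.contDiffAt (hI.mem_nhds hs)).differentiableAt (by simp)).hasDerivAt
  have hdqd : ∀ s ∈ I, HasDerivAt (deriv q) (deriv (deriv q) s) s := fun s hs =>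
    ((hdq.contDiffAt (hI.mem_nhds hs)).differentiableAt (by simp)).hasDerivAt
  -- deriv r on I
  have hr' : ∀ s ∈ I, deriv r s = 4 * q s * deriv q s := by
    intro s hs
    have heq : r =ᶠ[𝓝 s] fun u => -1 + 2 * (q u) ^ 2 :=
      Filter.eventually_of_mem (hI.mem_nhds hs) hrq
    rw [heq.deriv_eq]
    have : HasDerivAt (fun u => -1 + 2 * (q u) ^ 2)
        (2 * (2 * q s ^ 1 * deriv q s)) s := (((hqd s hs).pow 2).const_mul 2).const_add (-1)
    rw [this.deriv]; ring
  -- second derivative of s * deriv q s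
  have hA : ∀ s ∈ I, deriv (fun u => u * deriv q u) s
      = deriv q s + s * deriv (deriv q) s := by
    intro s hs
    have : HasDerivAt (fun u => u * deriv q u)
        (1 * deriv q s + s * deriv (deriv q) s) s := (hasDerivAt_id s).mul (hdqd s hs)
    rw [this.deriv]; ring
  -- second derivative of s * deriv r s
  have hAr : ∀ s ∈ I, deriv (fun u => u * deriv r u) s
      = 4 * q s * deriv q s + 4 * s * (deriv q s) ^ 2 + 4 * s * q s * deriv (deriv q) s := by
    intro s hs
    have heq : (fun u => u * deriv r u) =ᶠ[𝓝 s]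
        fun u => u * (4 * q u * deriv q u) :=
      Filter.eventually_of_mem (hI.mem_nhds hs) (fun u hu => by simp only []; rw [hr' u hu])
    rw [heq.deriv_eq]
    have : HasDerivAt (fun u => u * (4 * q u * deriv q u))
        (1 * (4 * q s * deriv q s)
          + s * (4 * deriv q s * deriv q s + 4 * q s * deriv (deriv q) s)) s :=
      (hasDerivAt_id s).mul (((hqd s hs).const_mul 4).mul (hdqd s hs))
    rw [this.deriv]; ring
  -- pointwise identity where q ≠ 0
  have main : ∀ s ∈ I, q s ≠ 0 →
      s * ((q s) ^ 2 - 1) * deriv (fun u => u * deriv q u) s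
        = q s * (s * deriv q s) ^ 2 + (1 / s) * (q s) ^ 3 * ((q s) ^ 2 - 2)
            + (1 / s - a ^ 2 / 4) * q s := by
    intro s hs hqs
    have hs0 : s ≠ 0 := ne_of_gt (hIpos hs)
    have h := ode s hs
    rw [hrq s hs, hr' s hs, hAr s hs] at h
    rw [hA s hs]
    have := key a s (q s) (deriv q s) (deriv (deriv q) s) hs0 hqs (by linear_combination h)
    linear_combination this
  intro t ht
  by_cases hz : ∀ᶠ s in 𝓝 t, q s = 0
  · -- q vanishes near t
    have hq0 : q t = 0 := hz.self_of_nhds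
    have hdq0' : ∀ᶠ s in 𝓝 t, deriv q s = 0 := by
      have := eventually_eventually_nhds.mpr hz
      filter_upwards [this] with s hs
      have : q =ᶠ[𝓝 s] fun _ => (0 : ℝ) := hs
      rw [this.deriv_eq, deriv_const]
    have hdq0 : deriv q t = 0 := hdq0'.self_of_nhds
    have hA0 : deriv (fun u => u * deriv q u) t = 0 := by
      have heq : (fun u => u * deriv q u) =ᶠ[𝓝 t] fun _ => (0 : ℝ) := by
        filter_upwards [hdq0'] with s hs; rw [hs, mul_zero]
      rw [heq.deriv_eq, deriv_const]
    rw [hq0, hdq0, hA0]; ring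
  · -- t is in the closure of {q ≠ 0} ∩ I; use continuity
    set G : ℝ → ℝ := fun s =>
      s * ((q s) ^ 2 - 1) * deriv (fun u => u * deriv q u) s
        - (q s * (s * deriv q s) ^ 2 + (1 / s) * (q s) ^ 3 * ((q s) ^ 2 - 2)
            + (1 / s - a ^ 2 / 4) * q s) with hGdef
    have hqc : ContinuousOn q I := hq.continuousOn
    have hdqc : ContinuousOn (deriv q) I := hdq.continuousOn
    have hAc : ContinuousOn (deriv (fun u => u * deriv q u)) I := by
      have hB : ContDiffOn ℝ (⊤ : ℕ∞) (fun u => u * deriv q u) I :=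
        (contDiffOn_id).mul hdq
      have hB' : ContDiffOn ℝ (⊤ : ℕ∞) (deriv fun u => u * deriv q u) I :=
        hB.deriv_of_isOpen hI (by simp)
      exact hB'.continuousOn
    have hinv : ContinuousOn (fun s : ℝ => 1 / s) I :=
      ContinuousOn.div continuousOn_const continuousOn_id
        (fun s hs => ne_of_gt (hIpos hs))
    have hGc : ContinuousOn G I := by
      apply ContinuousOn.sub
      · exact (continuousOn_id.mul ((hqc.pow 2).sub continuousOn_const)).mul hAc
      · exact ((hqc.mul ((continuousOn_id.mul hdqc).pow 2)).add
          ((hinv.mul (hqc.pow 3)).mul ((hqc.pow 2).sub continuousOn_const))).add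
          ((hinv.sub continuousOn_const).mul hqc)
    set S : Set ℝ := {s | s ∈ I ∧ q s ≠ 0} with hSdef
    have hGS : ∀ s ∈ S, G s = 0 := fun s hs =>
      sub_eq_zero.mpr (main s hs.1 hs.2)
    have hclos : t ∈ closure S := by
      rw [mem_closure_iff_frequently]
      exact ((hI.eventually_mem ht).and_frequently
        (Filter.not_eventually.mp hz))
    have hne : (𝓝[S] t).NeBot := mem_closure_iff_nhdsWithin_neBot.mp hclos
    have h1 : Filter.Tendsto G (𝓝[S] t) (𝓝 (G t)) :=
      (hGc.continuousAt (hI.mem_nhds ht)).continuousWithinAt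
    have h2 : Filter.Tendsto G (𝓝[S] t) (𝓝 0) := by
      have hev : ∀ᶠ s in 𝓝[S] t, G s = 0 :=
        eventually_mem_nhdsWithin.mono (fun s hs => hGS s hs)
      exact (Filter.tendsto_congr' hev).mpr tendsto_const_nhds
    have hG0 : G t = 0 := tendsto_nhds_unique h1 h2
    exact sub_eq_zero.mp hG0
end

section
/- Let y(t) solve y'' = (y')²/y - y'/t + y³ - (C a)/t · y² + C(a-1)/t⁴ - 1/(t⁶ y) on an interval of positive reals where y ≠ 0, with C = ±1. Then under the change of variables ξ = t^{-1/2}, z(ξ) = t^{3/2} y(t) (i.e. y = ξ³ z), the function z satisfies the standard Painlevé III equation z''(ξ) = (z'(ξ))²/z - z'(ξ)/ξ + 4z³ - (4Ca/ξ) z² + 4C(a-1)/ξ - 4/z. -/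
private lemma hasDerivAt_inv_sq {x : ℝ} (hx : x ≠ 0) :
    HasDerivAt (fun x : ℝ => 1 / x ^ 2) (-2 / x ^ 3) x := by
  have h := (hasDerivAt_pow 2 x).inv (pow_ne_zero 2 hx)
  have hval : -(↑(2:ℕ) * x ^ (2 - 1)) / (x ^ 2) ^ 2 = -2 / x ^ 3 := by
    field_simp
    ring
  rw [hval] at h
  simp only [one_div]
  exact h

/-- Change of variables `ξ = t^{-1/2}`, `y = ξ³ z` takes the Painlevé III form
`y'' = (y')²/y - y'/t + y³ - (Ca/t)y² + C(a-1)/t⁴ - 1/(t⁶y)` to the standard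
Painlevé III equation for `z(ξ)`. -/
theorem stmt_10 (a C : ℝ) (hC : C = 1 ∨ C = -1)
    (I : Set ℝ) (hI : IsOpen I) (hIpos : I ⊆ Set.Ioi 0)
    (y : ℝ → ℝ) (hy : ContDiffOn ℝ (⊤ : ℕ∞) y I) (hy0 : ∀ t ∈ I, y t ≠ 0)
    (ode : ∀ t ∈ I,
        deriv (deriv y) t
          = (deriv y t) ^ 2 / y t - deriv y t / t + (y t) ^ 3
              - (C * a / t) * (y t) ^ 2 + C * (a - 1) / t ^ 4
              - 1 / (t ^ 6 * y t))
    (z : ℝ → ℝ)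
    (hz : ∀ ξ : ℝ, 0 < ξ → z ξ = y (1 / ξ ^ 2) / ξ ^ 3) :
    ∀ ξ : ℝ, 0 < ξ → (1 / ξ ^ 2) ∈ I →
      deriv (deriv z) ξ
        = (deriv z ξ) ^ 2 / z ξ - deriv z ξ / ξ + 4 * (z ξ) ^ 3
            - (4 * C * a / ξ) * (z ξ) ^ 2 + 4 * C * (a - 1) / ξ - 4 / z ξ := by
  -- regularity of deriv y
  have hy' : ContDiffOn ℝ (⊤ : ℕ∞) (deriv y) I := hy.deriv_of_isOpen hI (by simp)
  -- the open set J where everything lives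
  set J : Set ℝ := Set.Ioi 0 ∩ (fun x : ℝ => 1 / x ^ 2) ⁻¹' I with hJdef
  have hJopen : IsOpen J := by
    apply ContinuousOn.isOpen_inter_preimage _ isOpen_Ioi hI
    intro x hx
    have hx0 : x ≠ 0 := ne_of_gt hx
    exact (ContinuousAt.continuousWithinAt
      (continuousAt_const.div ((continuousAt_id.pow 2)) (pow_ne_zero 2 hx0)))
  -- auxiliary first-derivative formula
  set G : ℝ → ℝ := fun x => -2 * deriv y (1 / x ^ 2) / x ^ 6 - 3 * y (1 / x ^ 2) / x ^ 4
    with hGdef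
  have hg : ∀ x ∈ J, HasDerivAt (fun x : ℝ => y (1 / x ^ 2) / x ^ 3) (G x) x := by
    intro x hx
    have hx0 : (0:ℝ) < x := hx.1
    have hxne : x ≠ 0 := ne_of_gt hx0
    have hIx : (1 / x ^ 2) ∈ I := hx.2
    have hyd : DifferentiableAt ℝ y (1 / x ^ 2) :=
      (hy.contDiffAt (hI.mem_nhds hIx)).differentiableAt (by simp)
    have hcomp : HasDerivAt (fun x : ℝ => y (1 / x ^ 2))
        (deriv y (1 / x ^ 2) * (-2 / x ^ 3)) x :=
      (hyd.hasDerivAt.comp x (hasDerivAt_inv_sq hxne))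
    have hdiv := hcomp.div (hasDerivAt_pow 3 x) (pow_ne_zero 3 hxne)
    refine hdiv.congr_deriv ?_
    rw [hGdef]
    field_simp
    ring
  -- z agrees with the formula near any point of J, hence so do derivatives
  intro ξ hξ hmem
  have hξne : ξ ≠ 0 := ne_of_gt hξ
  have hξJ : ξ ∈ J := ⟨hξ, hmem⟩
  have hJnhds : J ∈ nhds ξ := hJopen.mem_nhds hξJ
  have hev : z =ᶠ[nhds ξ] fun x : ℝ => y (1 / x ^ 2) / x ^ 3 := by
    filter_upwards [isOpen_Ioi.mem_nhds hξ] with x hx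
    exact hz x hx
  have hdz : deriv z =ᶠ[nhds ξ] G := by
    filter_upwards [hev.deriv, hJnhds] with x h1 h2
    rw [h1, (hg x h2).deriv]
  -- second derivative of the formula
  have hIξ : (1 / ξ ^ 2) ∈ I := hmem
  have hyd : DifferentiableAt ℝ y (1 / ξ ^ 2) :=
    (hy.contDiffAt (hI.mem_nhds hIξ)).differentiableAt (by simp)
  have hyd2 : DifferentiableAt ℝ (deriv y) (1 / ξ ^ 2) :=
    (hy'.contDiffAt (hI.mem_nhds hIξ)).differentiableAt (by simp)
  have hcomp1 : HasDerivAt (fun x : ℝ => y (1 / x ^ 2))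
      (deriv y (1 / ξ ^ 2) * (-2 / ξ ^ 3)) ξ :=
    (hyd.hasDerivAt.comp ξ (hasDerivAt_inv_sq hξne))
  have hcomp2 : HasDerivAt (fun x : ℝ => deriv y (1 / x ^ 2))
      (deriv (deriv y) (1 / ξ ^ 2) * (-2 / ξ ^ 3)) ξ :=
    by have h := hyd2.hasDerivAt.comp ξ (hasDerivAt_inv_sq hξne); exact h
  have hG : HasDerivAt G
      (4 * deriv (deriv y) (1 / ξ ^ 2) / ξ ^ 9 + 18 * deriv y (1 / ξ ^ 2) / ξ ^ 7
        + 12 * y (1 / ξ ^ 2) / ξ ^ 5) ξ := by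
    have hA := ((hcomp2.const_mul (-2 : ℝ)).div (hasDerivAt_pow 6 ξ) (pow_ne_zero 6 hξne))
    have hB := ((hcomp1.const_mul (-3 : ℝ)).div (hasDerivAt_pow 4 ξ) (pow_ne_zero 4 hξne))
    have hGeq : G = fun x : ℝ => -2 * deriv y (1 / x ^ 2) / x ^ 6
        + -3 * y (1 / x ^ 2) / x ^ 4 := by
      rw [hGdef]; funext x; ring
    rw [hGeq]
    refine (hA.add hB).congr_deriv ?_
    field_simp
    ring
  have hzz : deriv (deriv z) ξ = 4 * deriv (deriv y) (1 / ξ ^ 2) / ξ ^ 9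
      + 18 * deriv y (1 / ξ ^ 2) / ξ ^ 7 + 12 * y (1 / ξ ^ 2) / ξ ^ 5 := by
    rw [hdz.deriv_eq, hG.deriv]
  -- now substitute everything
  have hzval : z ξ = y (1 / ξ ^ 2) / ξ ^ 3 := hz ξ hξ
  have hdzval : deriv z ξ = G ξ := hdz.self_of_nhds
  have hode := ode (1 / ξ ^ 2) hmem
  have hyne : y (1 / ξ ^ 2) ≠ 0 := hy0 _ hmem
  rw [hzz, hzval, hdzval, hode, hGdef]
  have ht2 : (1:ℝ) / ξ ^ 2 ≠ 0 := by positivity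
  field_simp
  ring
end

section
/- Suppose q satisfies q'' = tq + 2q³ and S₊ satisfies S₊' = -q S₊ with S₋ = 1/S₊. Then with u = (q')² - tq² - q⁴, the zero-curvature equation ∂_t L = ∂_x B + [B, L] holds for the matrices L(x,t) = [[q², -(qx+q')], [-qx+q', x² - t - q²]] and B(x,t) = [[u, q], [q, u - x]]. -/
/-- Zero-curvature equation `∂_t L = ∂_x B + [B,L]` (entrywise) for the
soft-edge Lax pair built from a Painlevé II solution `q` and
`u = (q')² - tq² - q⁴`, with `S₊' = -qS₊`, `S₋ = 1/S₊`. -/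
theorem stmt_14 (q Sp Sm u : ℝ → ℝ)
    (hq : ContDiff ℝ 2 q) (hSp : ContDiff ℝ 1 Sp)
    (ode : ∀ t : ℝ, deriv (deriv q) t = t * q t + 2 * (q t) ^ 3)
    (hS : ∀ t : ℝ, deriv Sp t = -(q t) * Sp t)
    (hSm : ∀ t : ℝ, Sm t = 1 / Sp t)
    (hu : ∀ t : ℝ, u t = (deriv q t) ^ 2 - t * (q t) ^ 2 - (q t) ^ 4)
    (L B : ℝ → ℝ → Matrix (Fin 2) (Fin 2) ℝ)
    (hL : ∀ x t : ℝ, L x t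
        = !![(q t) ^ 2, -(q t * x + deriv q t);
             -(q t * x) + deriv q t, x ^ 2 - t - (q t) ^ 2])
    (hB : ∀ x t : ℝ, B x t = !![u t, q t; q t, u t - x]) :
    ∀ x t : ℝ, ∀ i j : Fin 2,
      deriv (fun s => L x s i j) t
        = deriv (fun v => B v t i j) x
            + (B x t * L x t - L x t * B x t) i j := by
  have hq1 : ContDiff ℝ 1 (deriv q) :=
    (contDiff_succ_iff_deriv.mp (show ContDiff ℝ (1 + 1) q by exact_mod_cast hq)).2.2
  have hqd : ∀ s : ℝ, HasDerivAt q (deriv q s) s := fun s =>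
    ((hq.differentiable (by norm_num)) s).hasDerivAt
  have hq'd : ∀ s : ℝ, HasDerivAt (deriv q) (s * q s + 2 * (q s) ^ 3) s := fun s => by
    have := ((hq1.differentiable one_ne_zero) s).hasDerivAt
    rwa [ode s] at this
  intro x t i j
  have e00 : HasDerivAt (fun s => (q s) ^ 2) (2 * q t * deriv q t) t := by
    simpa [mul_comm, mul_assoc, mul_left_comm] using (hqd t).fun_pow 2
  have e01 : HasDerivAt (fun s => -(q s * x + deriv q s))
      (-(deriv q t * x + (t * q t + 2 * (q t) ^ 3))) t :=
    (((hqd t).mul_const x).add (hq'd t)).neg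
  have e10 : HasDerivAt (fun s => -(q s * x) + deriv q s)
      (-(deriv q t * x) + (t * q t + 2 * (q t) ^ 3)) t :=
    ((hqd t).mul_const x).neg.add (hq'd t)
  have e11 : HasDerivAt (fun s => x ^ 2 - s - (q s) ^ 2)
      (0 - 1 - 2 * q t * deriv q t) t :=
    ((hasDerivAt_const t (x ^ 2)).sub (hasDerivAt_id t)).sub
      (by simpa [mul_comm, mul_assoc, mul_left_comm] using (hqd t).fun_pow 2)
  have f11 : HasDerivAt (fun v : ℝ => u t - v) (0 - 1) x :=
    (hasDerivAt_const x (u t)).sub (hasDerivAt_id x)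
  fin_cases i <;> fin_cases j <;>
    simp only [hL, hB, Matrix.sub_apply, Matrix.mul_apply, Fin.sum_univ_two,
      Matrix.cons_val', Matrix.cons_val_zero, Matrix.cons_val_one, Matrix.head_cons,
      Matrix.head_fin_const, Matrix.empty_val', Matrix.cons_val_fin_one,
      Matrix.of_apply, Fin.isValue, Fin.mk_zero, Fin.mk_one]
  · rw [e00.deriv, deriv_const]; ring
  · rw [e01.deriv, deriv_const]; ring
  · rw [e10.deriv, deriv_const]; ring
  · rw [e11.deriv, f11.deriv]; ring
end

section
/- Let q satisfy q'' = tq + 2q³ and u = (q')² - tq² - q⁴ (so u' = -q²). Then any pair of functions (F, G) of (x,t) satisfying ∂_x(F,G)ᵀ = L(F,G)ᵀ and ∂_t(F,G)ᵀ = B(F,G)ᵀ with L = [[q², -(qx+q')],[-qx+q', x²-t-q²]] and B = [[u, q],[q, u-x]] has first component F satisfying the soft-edge equation ∂_t F + ∂_{xx} F + (t - x²) ∂_x F = 0. -/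
/-- If `(F,G)` is a joint eigenvector of the soft-edge Lax pair built from a
Painlevé II solution `q` (parameter 0) with `u = (q')² - tq² - q⁴`, then `F`
satisfies the soft-edge Fokker-Planck equation
`∂_t F + ∂_{xx} F + (t - x²) ∂_x F = 0`. -/
theorem stmt_15 (q u : ℝ → ℝ) (F G : ℝ → ℝ → ℝ)
    (hq : ContDiff ℝ 2 q)
    (hF : ContDiff ℝ 2 (fun p : ℝ × ℝ => F p.1 p.2))
    (hG : ContDiff ℝ 2 (fun p : ℝ × ℝ => G p.1 p.2))
    (ode : ∀ t : ℝ, deriv (deriv q) t = t * q t + 2 * (q t) ^ 3)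
    (hu : ∀ t : ℝ, u t = (deriv q t) ^ 2 - t * (q t) ^ 2 - (q t) ^ 4)
    (laxX1 : ∀ x t : ℝ, deriv (fun v => F v t) x
        = (q t) ^ 2 * F x t + (-(q t * x + deriv q t)) * G x t)
    (laxX2 : ∀ x t : ℝ, deriv (fun v => G v t) x
        = (-(q t * x) + deriv q t) * F x t + (x ^ 2 - t - (q t) ^ 2) * G x t)
    (laxT1 : ∀ x t : ℝ, deriv (fun s => F x s) t
        = u t * F x t + q t * G x t)
    (laxT2 : ∀ x t : ℝ, deriv (fun s => G x s) t
        = q t * F x t + (u t - x) * G x t) :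
    ∀ x t : ℝ,
      deriv (fun s => F x s) t
        + deriv (fun v => deriv (fun w => F w t) v) x
        + (t - x ^ 2) * deriv (fun v => F v t) x = 0 := by
  intro x t
  have hFdiff : Differentiable ℝ (fun w : ℝ => F w t) :=
    (hF.differentiable (by norm_num)).comp
      (differentiable_id.prodMk (differentiable_const t))
  have hGdiff : Differentiable ℝ (fun w : ℝ => G w t) :=
    (hG.differentiable (by norm_num)).comp
      (differentiable_id.prodMk (differentiable_const t))
  have hFx : ∀ v : ℝ, HasDerivAt (fun w => F w t)
      ((q t) ^ 2 * F v t + (-(q t * v + deriv q t)) * G v t) v := by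
    intro v
    have h := (hFdiff v).hasDerivAt
    rwa [laxX1] at h
  have hGx : ∀ v : ℝ, HasDerivAt (fun w => G w t)
      ((-(q t * v) + deriv q t) * F v t + (v ^ 2 - t - (q t) ^ 2) * G v t) v := by
    intro v
    have h := (hGdiff v).hasDerivAt
    rwa [laxX2] at h
  have hB : HasDerivAt (fun v : ℝ => (-(q t * v + deriv q t))) (-(q t)) x := by
    have h := (((hasDerivAt_id x).const_mul (q t)).add_const (deriv q t)).neg
    simp only [mul_one] at h
    exact h
  have h2 : HasDerivAt (fun v => (q t) ^ 2 * F v t + (-(q t * v + deriv q t)) * G v t)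
      ((q t) ^ 2 * ((q t) ^ 2 * F x t + (-(q t * x + deriv q t)) * G x t)
        + ((-(q t)) * G x t + (-(q t * x + deriv q t)) *
          ((-(q t * x) + deriv q t) * F x t + (x ^ 2 - t - (q t) ^ 2) * G x t))) x :=
    ((hFx x).const_mul ((q t) ^ 2)).add (hB.mul (hGx x))
  have hfun : (fun v => deriv (fun w => F w t) v)
      = fun v => (q t) ^ 2 * F v t + (-(q t * v + deriv q t)) * G v t :=
    funext fun v => laxX1 v t
  rw [hfun, h2.deriv, laxT1, laxX1, hu]
  ring
end
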